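/- arXiv:hep-th/0410277 — 4 statements merged into one kernel-verified Lean document; each statement's English description precedes it below -/
import Mathlib

section
/- Let Φ be a root system with base Δ, and let α = Σ_i α^i Δ_i be a positive root whose coefficient α^k at the simple root Δ_k is non-zero. Then α can be constructed by successively adding simple roots starting with Δ_k, such that every intermediate partial sum is a root. Equivalently, there is a sequence of positive roots β_1 = Δ_k, β_2, ..., β_m = α with each β_{j+1} − β_j a simple root. -/
/-- A reduced crystallographic root system `Φ` in a real inner product space `V`,
together with a fixed base `Δ` of simple roots. -/
structure RootSystemWithBase (V : Type*) [NormedAddCommGroup V] [InnerProductSpace ℝ V] where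
  Φ : Set V
  Δ : Finset V
  finite : Φ.Finite
  base_sub : ↑Δ ⊆ Φ
  ne_zero : ∀ α ∈ Φ, α ≠ 0
  reduced : ∀ α ∈ Φ, ∀ t : ℝ, t • α ∈ Φ → t = 1 ∨ t = -1
  reflect : ∀ α ∈ Φ, ∀ β ∈ Φ,
    β - (2 * (inner ℝ β α : ℝ) / (inner ℝ α α : ℝ)) • α ∈ Φ
  crystal : ∀ α ∈ Φ, ∀ β ∈ Φ, ∃ n : ℤ, (2 * (inner ℝ β α : ℝ) / (inner ℝ α α : ℝ)) = n
  base_indep : LinearIndependent ℝ (fun s : {x // x ∈ Δ} => (s : V))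
  base_expand : ∀ α ∈ Φ, ∃ c : V → ℤ,
    α = ∑ s ∈ Δ, (c s : ℝ) • s ∧ ((∀ s ∈ Δ, 0 ≤ c s) ∨ (∀ s ∈ Δ, c s ≤ 0))

variable {V : Type*} [NormedAddCommGroup V] [InnerProductSpace ℝ V]

/-- A positive root: a root whose coefficients with respect to the base are non-negative. -/
def RootSystemWithBase.IsPositiveRoot (R : RootSystemWithBase V) (α : V) : Prop :=
  α ∈ R.Φ ∧ ∃ c : V → ℤ, α = ∑ s ∈ R.Δ, (c s : ℝ) • s ∧ ∀ s ∈ R.Δ, 0 ≤ c s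

/-!
Induct on the height of `α`. If some simple root `s` has `⟪α, s⟫ > 0` and `α - s` keeps a
positive `k`-coordinate, then `α - s` is a root and we descend. Otherwise the `k`-coordinate of
`α` is `1`, and `γ = α - k` is a positive root with vanishing `k`-coordinate and `⟪γ, k⟫ < 0`, so
some simple `t` in its support has `⟪t, k⟫ < 0`. A chain from `t` to `γ` only adds simple roots
other than `k`, which pair non-positively with `k`; hence the pairing with `k` stays negative along
it, and adding `k` to each member yields the chain `k, t + k, …, γ + k = α`.
-/

open scoped RealInnerProductSpace

open Relation

theorem Relation.ReflTransGen.exists_seq {α : Type*} {r : α → α → Prop} {a b : α}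
    (h : ReflTransGen r a b) :
    ∃ (m : ℕ) (f : ℕ → α), f 0 = a ∧ f m = b ∧ (∀ j ≤ m, ReflTransGen r a (f j)) ∧
      ∀ j < m, r (f j) (f (j + 1)) := by
  induction h with
  | refl =>
    exact ⟨0, fun _ => a, rfl, rfl, fun _ _ => .refl, fun _ h => absurd h (Nat.not_lt_zero _)⟩
  | @tail b c hab hbc ih =>
    obtain ⟨m, f, h0, hm, hreach, hstep⟩ := ih
    refine ⟨m + 1, fun j => if j ≤ m then f j else c, by simpa using h0, by simp, ?_, ?_⟩
    · intro j hj
      dsimp only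
      split_ifs with hjm
      · exact hreach j hjm
      · exact hab.tail hbc
    · intro j hj
      rcases Nat.lt_succ_iff_lt_or_eq.1 hj with hj | rfl
      · simpa [hj.le, Nat.succ_le_of_lt hj] using hstep j hj
      · simpa [hm] using hbc

namespace RootSystemWithBase

variable (R : RootSystemWithBase V)

open scoped Classical

theorem inner_self_pos {α : V} (hα : α ∈ R.Φ) : 0 < ⟪α, α⟫ :=
  real_inner_self_pos.2 (R.ne_zero α hα)

theorem neg_mem {α : V} (hα : α ∈ R.Φ) : -α ∈ R.Φ := by
  have h := R.reflect α hα α hα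
  rwa [mul_div_assoc, div_self (R.inner_self_pos hα).ne', mul_one, two_smul, sub_add_cancel_left]
    at h

theorem inner_mul_inner_lt {α β : V} (hα : α ∈ R.Φ) (hβ : β ∈ R.Φ) (h₁ : β ≠ α) (h₂ : β ≠ -α) :
    ⟪α, β⟫ * ⟪α, β⟫ < ⟪α, α⟫ * ⟪β, β⟫ := by
  refine (real_inner_mul_inner_self_le α β).lt_of_ne fun heq => ?_
  have hnorm : ‖⟪α, β⟫‖ = ‖α‖ * ‖β‖ := by
    rw [Real.norm_eq_abs, ← sq_eq_sq₀ (abs_nonneg _) (by positivity), sq_abs, mul_pow, sq, heq,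
      real_inner_self_eq_norm_sq, real_inner_self_eq_norm_sq]
  obtain ⟨r, -, rfl⟩ := (norm_inner_eq_norm_iff (R.ne_zero α hα) (R.ne_zero β hβ)).1 hnorm
  rcases R.reduced α hα r hβ with rfl | rfl
  · exact h₁ (one_smul ℝ α)
  · exact h₂ (neg_one_smul ℝ α)

theorem sub_mem_of_inner_pos {α β : V} (hα : α ∈ R.Φ) (hβ : β ∈ R.Φ) (hne : α ≠ β)
    (hpos : 0 < ⟪α, β⟫) : α - β ∈ R.Φ := by
  have hβα : β ≠ -α := by
    rintro rfl
    have := R.inner_self_pos hα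
    rw [inner_neg_right] at hpos
    linarith
  have hlt := R.inner_mul_inner_lt hα hβ hne.symm hβα
  have hαα := R.inner_self_pos hα
  have hββ := R.inner_self_pos hβ
  obtain ⟨m, hm⟩ := R.crystal α hα β hβ
  obtain ⟨n, hn⟩ := R.crystal β hβ α hα
  rw [real_inner_comm] at hm
  have hm0 : (0 : ℝ) < m := hm ▸ by positivity
  have hn0 : (0 : ℝ) < n := hn ▸ by positivity
  have hmn : (m : ℝ) * n < 4 := by
    rw [← hm, ← hn, div_mul_div_comm, div_lt_iff₀ (by positivity)]
    nlinarith
  have : m = 1 ∨ n = 1 := by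
    have hm1 : 1 ≤ m := by exact_mod_cast hm0
    have hn1 : 1 ≤ n := by exact_mod_cast hn0
    have : m * n < 4 := by exact_mod_cast hmn
    by_contra! h
    nlinarith [h.1.lt_of_le' hm1, h.2.lt_of_le' hn1]
  rcases this with rfl | rfl
  · have h := R.neg_mem (R.reflect α hα β hβ)
    rwa [real_inner_comm, hm, Int.cast_one, one_smul, neg_sub] at h
  · have h := R.reflect β hβ α hα
    rwa [hn, Int.cast_one, one_smul] at h

theorem add_mem_of_inner_neg {α β : V} (hα : α ∈ R.Φ) (hβ : β ∈ R.Φ) (hne : α ≠ -β)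
    (hneg : ⟪α, β⟫ < 0) : α + β ∈ R.Φ := by
  simpa using R.sub_mem_of_inner_pos hα (R.neg_mem hβ) hne (by rwa [inner_neg_right, neg_pos])

/-- Extended to all of `V` through a basis containing `Δ`; zero when `s ∉ Δ`. -/
noncomputable def coord (s : V) : V →ₗ[ℝ] ℝ :=
  if hs : s ∈ R.Δ then
    (Module.Basis.extend (s := (R.Δ : Set V)) R.base_indep).coord
      ⟨s, LinearIndepOn.subset_extend _ _ hs⟩
  else 0

theorem coord_simple {s t : V} (hs : s ∈ R.Δ) (ht : t ∈ R.Δ) :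
    R.coord s t = if t = s then 1 else 0 := by
  set b := Module.Basis.extend (s := (R.Δ : Set V)) R.base_indep
  have hbt : b ⟨t, LinearIndepOn.subset_extend _ _ ht⟩ = t := Module.Basis.extend_apply_self _ _
  rw [coord, dif_pos hs]
  conv_lhs => rw [← hbt]
  rw [Module.Basis.coord_apply, Module.Basis.repr_self, Finsupp.single_apply]
  simp only [Subtype.mk.injEq]

theorem coord_self {s : V} (hs : s ∈ R.Δ) : R.coord s s = 1 := by
  simp [R.coord_simple hs hs]

theorem coord_sum_smul (c : V → ℝ) {s : V} (hs : s ∈ R.Δ) :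
    R.coord s (∑ x ∈ R.Δ, c x • x) = c s := by
  simp only [map_sum, map_smul, smul_eq_mul]
  rw [Finset.sum_congr rfl fun x hx => by rw [R.coord_simple hs hx]]
  simp [hs]

theorem sum_coord_smul {v : V} (hv : v ∈ Submodule.span ℝ (R.Δ : Set V)) :
    ∑ s ∈ R.Δ, R.coord s v • s = v := by
  obtain ⟨c, -, rfl⟩ := Submodule.mem_span_finset.1 hv
  exact Finset.sum_congr rfl fun s hs => by rw [R.coord_sum_smul c hs]

theorem mem_span {α : V} (hα : α ∈ R.Φ) : α ∈ Submodule.span ℝ (R.Δ : Set V) := by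
  obtain ⟨c, hc, -⟩ := R.base_expand α hα
  exact hc ▸ Submodule.sum_mem _ fun s hs => Submodule.smul_mem _ _ (Submodule.subset_span hs)

theorem exists_int_coord {α s : V} (hα : α ∈ R.Φ) (hs : s ∈ R.Δ) : ∃ n : ℤ, R.coord s α = n := by
  obtain ⟨c, hc, -⟩ := R.base_expand α hα
  exact ⟨c s, by rw [hc, R.coord_sum_smul _ hs]⟩

theorem coord_nonneg_of_coord_pos {α s : V} (hα : α ∈ R.Φ) (hs : s ∈ R.Δ)
    (h : 0 < R.coord s α) : ∀ t ∈ R.Δ, 0 ≤ R.coord t α := by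
  obtain ⟨c, hc, hsign⟩ := R.base_expand α hα
  have hcoord : ∀ t ∈ R.Δ, R.coord t α = c t := fun t ht => by rw [hc, R.coord_sum_smul _ ht]
  rcases hsign with hnn | hnp
  · exact fun t ht => by rw [hcoord t ht]; exact_mod_cast hnn t ht
  · rw [hcoord s hs] at h
    exact absurd (hnp s hs) (by exact_mod_cast h.not_ge)

theorem isPositiveRoot_iff {α : V} :
    R.IsPositiveRoot α ↔ α ∈ R.Φ ∧ ∀ s ∈ R.Δ, 0 ≤ R.coord s α := by
  constructor
  · rintro ⟨hα, c, hc, hnn⟩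
    exact ⟨hα, fun s hs => by rw [hc, R.coord_sum_smul _ hs]; exact_mod_cast hnn s hs⟩
  · rintro ⟨hα, hnn⟩
    obtain ⟨c, hc, -⟩ := R.base_expand α hα
    refine ⟨hα, c, hc, fun s hs => ?_⟩
    have := hnn s hs
    rw [hc, R.coord_sum_smul _ hs] at this
    exact_mod_cast this

theorem inner_simple_nonpos {s t : V} (hs : s ∈ R.Δ) (ht : t ∈ R.Δ) (hne : s ≠ t) :
    ⟪s, t⟫ ≤ 0 := by
  by_contra! hpos
  have hst := R.sub_mem_of_inner_pos (R.base_sub hs) (R.base_sub ht) hne hpos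
  have h := R.coord_nonneg_of_coord_pos hst hs (by simp [R.coord_self hs, R.coord_simple hs ht,
    hne.symm]) t ht
  norm_num [R.coord_self ht, R.coord_simple ht hs, hne] at h

theorem exists_coord_pos_inner_neg {v w : V} (hv : v ∈ Submodule.span ℝ (R.Δ : Set V))
    (hnn : ∀ s ∈ R.Δ, 0 ≤ R.coord s v) (hneg : ⟪w, v⟫ < 0) :
    ∃ s ∈ R.Δ, 0 < R.coord s v ∧ ⟪w, s⟫ < 0 := by
  rw [← R.sum_coord_smul hv, inner_sum, ← Finset.sum_const_zero] at hneg
  obtain ⟨s, hs, hlt⟩ := Finset.exists_lt_of_sum_lt hneg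
  rw [real_inner_smul_right] at hlt
  exact ⟨s, hs, (mul_neg_iff.1 hlt).resolve_right fun h => (hnn s hs).not_gt h.1⟩

theorem isPositiveRoot_of_coord_pos {α s : V} (hα : α ∈ R.Φ) (hs : s ∈ R.Δ)
    (h : 0 < R.coord s α) : R.IsPositiveRoot α :=
  R.isPositiveRoot_iff.2 ⟨hα, R.coord_nonneg_of_coord_pos hα hs h⟩

noncomputable def height (α : V) : ℝ := ∑ s ∈ R.Δ, R.coord s α

theorem height_sub_simple (α : V) {s : V} (hs : s ∈ R.Δ) : R.height (α - s) = R.height α - 1 := by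
  simp only [height, map_sub, Finset.sum_sub_distrib]
  rw [Finset.sum_congr rfl fun x hx => R.coord_simple hx hs]
  simp [hs]

def SimpleStep (β γ : V) : Prop := γ - β ∈ R.Δ ∧ γ ∈ R.Φ

theorem isPositiveRoot_of_reflTransGen {k β : V} (hk : k ∈ R.Δ)
    (h : ReflTransGen R.SimpleStep k β) : R.IsPositiveRoot β := by
  induction h with
  | refl => exact R.isPositiveRoot_of_coord_pos (R.base_sub hk) hk (by simp [R.coord_self hk])
  | @tail β γ _ hstep ih =>
    have hcoord : R.coord (γ - β) γ = R.coord (γ - β) β + 1 := by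
      rw [← R.coord_self hstep.1, ← map_add, add_sub_cancel]
    have hβ := (R.isPositiveRoot_iff.1 ih).2 _ hstep.1
    exact R.isPositiveRoot_of_coord_pos hstep.2 hstep.1 (by linarith)

theorem add_simple_mem {γ k : V} (hk : k ∈ R.Δ) (hγ : γ ∈ R.Φ) (hγk : R.coord k γ = 0)
    (hneg : ⟪γ, k⟫ < 0) : γ + k ∈ R.Φ :=
  R.add_mem_of_inner_neg hγ (R.base_sub hk) (fun h => by simp [h, R.coord_self hk] at hγk) hneg

theorem reflTransGen_add_simple {k t γ : V} (hk : k ∈ R.Δ) (ht : t ∈ R.Δ) (htk : ⟪t, k⟫ < 0)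
    (h : ReflTransGen R.SimpleStep t γ) (hγ : R.coord k γ = 0) :
    ReflTransGen R.SimpleStep k (γ + k) := by
  -- along the chain the pairing with `k` only decreases, so it stays negative
  suffices ReflTransGen R.SimpleStep k (γ + k) ∧ ⟪γ, k⟫ ≤ ⟪t, k⟫ from this.1
  induction h with
  | refl =>
    exact ⟨.single ⟨by simpa using ht, R.add_simple_mem hk (R.base_sub ht) hγ htk⟩, le_rfl⟩
  | @tail β γ hβ hstep ih =>
    have hsplit : R.coord k γ = R.coord k β + R.coord k (γ - β) := by
      rw [← map_add, add_sub_cancel]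
    have hβnn := (R.isPositiveRoot_iff.1 (R.isPositiveRoot_of_reflTransGen ht hβ)).2 k hk
    have hsk : γ - β ≠ k := fun h => by rw [h, R.coord_self hk] at hsplit; linarith
    rw [R.coord_simple hk hstep.1, if_neg hsk] at hsplit
    obtain ⟨hchain, hle⟩ := ih (by linarith)
    have hγβ : ⟪γ, k⟫ ≤ ⟪β, k⟫ := by
      have := R.inner_simple_nonpos hstep.1 hk hsk
      rw [inner_sub_left] at this
      linarith
    exact ⟨hchain.tail ⟨by simpa using hstep.1, R.add_simple_mem hk hstep.2 hγ (by linarith)⟩,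
      hγβ.trans hle⟩

theorem coord_eq_one_of_forall_inner_pos {α k : V} (hα : α ∈ R.Φ) (hk : k ∈ R.Δ)
    (hαk : 0 < R.coord k α) (h : ∀ s ∈ R.Δ, 0 < ⟪α, s⟫ → R.coord k (α - s) ≤ 0) :
    R.coord k α = 1 := by
  obtain ⟨s, hs, -, hαs⟩ := R.exists_coord_pos_inner_neg (R.mem_span hα)
    (R.coord_nonneg_of_coord_pos hα hk hαk) (w := -α)
    (by rw [inner_neg_left, neg_lt_zero]; exact R.inner_self_pos hα)
  rw [inner_neg_left, neg_lt_zero] at hαs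
  have hle : R.coord k α ≤ 1 := by
    have := h s hs hαs
    rw [map_sub, R.coord_simple hk hs] at this
    split_ifs at this <;> linarith
  obtain ⟨n, hn⟩ := R.exists_int_coord hα hk
  rw [hn] at hαk hle ⊢
  have h0 : 0 < n := by exact_mod_cast hαk
  have h1 : n ≤ 1 := by exact_mod_cast hle
  rw [show n = 1 by omega, Int.cast_one]

theorem exists_simple_inner_neg_of_forall_inner_pos {α k : V} (hα : α ∈ R.Φ) (hk : k ∈ R.Δ)
    (hαk : 0 < R.coord k α) (hne : α ≠ k)
    (h : ∀ s ∈ R.Δ, 0 < ⟪α, s⟫ → R.coord k (α - s) ≤ 0) :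
    α - k ∈ R.Φ ∧ R.coord k (α - k) = 0 ∧ ∃ t ∈ R.Δ, 0 < R.coord t (α - k) ∧ ⟪t, k⟫ < 0 := by
  have hnn := R.coord_nonneg_of_coord_pos hα hk hαk
  have hone := R.coord_eq_one_of_forall_inner_pos hα hk hαk h
  have hγk : R.coord k (α - k) = 0 := by rw [map_sub, hone, R.coord_self hk, sub_self]
  have hγnn : ∀ s ∈ R.Δ, 0 ≤ R.coord s (α - k) := fun s hs => by
    rw [map_sub, R.coord_simple hs hk]
    split_ifs with hks
    · rw [← hks, hone, sub_self]
    · simpa using hnn s hs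
  have hγspan : α - k ∈ Submodule.span ℝ (R.Δ : Set V) :=
    sub_mem (R.mem_span hα) (Submodule.subset_span hk)
  -- only `k` can pair positively with `α`, and `α - k` has no `k`-coordinate
  have hαγ : ⟪α, α - k⟫ ≤ 0 := by
    rw [← R.sum_coord_smul hγspan, inner_sum]
    refine Finset.sum_nonpos fun s hs => ?_
    rw [real_inner_smul_right]
    by_cases hαs : 0 < ⟪α, s⟫
    · have hsk : s = k := by
        by_contra hsk
        have := h s hs hαs
        rw [map_sub, hone, R.coord_simple hk hs, if_neg hsk] at this
        norm_num at this
      rw [hsk, hγk, zero_mul]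
    · exact mul_nonpos_of_nonneg_of_nonpos (hγnn s hs) (not_lt.1 hαs)
  have hkγ : ⟪k, α - k⟫ < 0 := by
    have := real_inner_self_pos.2 (sub_ne_zero.2 hne)
    rw [inner_sub_left] at this
    linarith
  have hαk' : 0 < ⟪α, k⟫ := by
    rw [inner_sub_right] at hαγ
    linarith [R.inner_self_pos hα]
  obtain ⟨t, ht, hγt, hkt⟩ := R.exists_coord_pos_inner_neg hγspan hγnn hkγ
  exact ⟨R.sub_mem_of_inner_pos hα (R.base_sub hk) hne hαk', hγk, t, ht, hγt,
    by rwa [real_inner_comm]⟩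

theorem reflTransGen_of_coord_pos {α k : V} (hα : α ∈ R.Φ) (hk : k ∈ R.Δ)
    (hαk : 0 < R.coord k α) : ReflTransGen R.SimpleStep k α := by
  obtain ⟨n, hn⟩ := exists_nat_ge (R.height α)
  induction n generalizing α k with
  | zero =>
    have : R.coord k α ≤ R.height α :=
      Finset.single_le_sum (R.coord_nonneg_of_coord_pos hα hk hαk) hk
    push_cast at hn
    linarith
  | succ n ih =>
    have hdrop : ∀ s ∈ R.Δ, R.height (α - s) ≤ n := fun s hs => by
      rw [R.height_sub_simple α hs]
      push_cast at hn
      linarith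
    by_cases hαk' : α = k
    · exact hαk' ▸ .refl
    by_cases hdesc : ∃ s ∈ R.Δ, 0 < ⟪α, s⟫ ∧ 0 < R.coord k (α - s)
    · obtain ⟨s, hs, hαs, hks⟩ := hdesc
      have hne : α ≠ s := by rintro rfl; simp at hks
      have hmem := R.sub_mem_of_inner_pos hα (R.base_sub hs) hne hαs
      exact (ih hmem hk hks (hdrop s hs)).tail ⟨by simpa using hs, hα⟩
    · push Not at hdesc
      obtain ⟨hγ, hγk, t, ht, hγt, htk⟩ :=
        R.exists_simple_inner_neg_of_forall_inner_pos hα hk hαk hαk' hdesc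
      simpa using R.reflTransGen_add_simple hk ht htk (ih hγ ht hγt (hdrop k hk)) hγk

end RootSystemWithBase

/-- A positive root `α` whose coefficient at the simple root `k` is non-zero
can be constructed by successively adding simple roots starting with `k`, so that every
intermediate partial sum is a (positive) root. -/
theorem positive_root_chain_from_simple_root
    (R : RootSystemWithBase V) (α k : V) (c : V → ℤ)
    (hα : α ∈ R.Φ)
    (hc : α = ∑ s ∈ R.Δ, (c s : ℝ) • s)
    (hpos : ∀ s ∈ R.Δ, 0 ≤ c s)
    (hk : k ∈ R.Δ)
    (hck : c k ≠ 0) :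
    ∃ (m : ℕ) (β : ℕ → V), β 0 = k ∧ β m = α ∧
      (∀ j ≤ m, R.IsPositiveRoot (β j)) ∧
      (∀ j < m, β (j + 1) - β j ∈ R.Δ) := by
  have hαk : 0 < R.coord k α := by
    rw [hc, R.coord_sum_smul _ hk]
    exact_mod_cast (hpos k hk).lt_of_ne' hck
  obtain ⟨m, β, h0, hm, hreach, hstep⟩ := (R.reflTransGen_of_coord_pos hα hk hαk).exists_seq
  exact ⟨m, β, h0, hm, fun j hj => R.isPositiveRoot_of_reflTransGen hk (hreach j hj),
    fun j hj => (hstep j hj).1⟩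
end

section
/- Let Φ be an irreducible root system with base Δ and highest root θ = Σ_i c_i Δ_i, where the Coxeter labels c_i are positive integers. Let S ⊆ Δ and define the level of a root α = Σ a_i Δ_i with respect to S as lev(α) = Σ_{Δ_i ∉ S} a_i. If every root has level in {−1, 0, 1}, then exactly one simple root lies outside S, and its Coxeter label equals 1. -/
variable {V : Type*} [NormedAddCommGroup V] [InnerProductSpace ℝ V]

/-!
The level of `θ` is `∑ c s` over the simple roots outside `S`, since linear independence of the
base identifies the coefficients of `θ` with its Coxeter labels. This sum of positive integers over
a nonempty set is at most `1`, so the set is a singleton whose label is `1`.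
-/

theorem LinearIndependent.eq_of_finset_sum_smul_eq {R M : Type*} [Ring R] [AddCommGroup M]
    [Module R M] {Δ : Finset M} (hΔ : LinearIndependent R (fun s : Δ => (s : M))) {a b : M → R}
    (hab : ∑ s ∈ Δ, a s • s = ∑ s ∈ Δ, b s • s) : ∀ s ∈ Δ, a s = b s := by
  rw [← Finset.sum_coe_sort Δ, ← Finset.sum_coe_sort Δ] at hab
  exact fun s hs => hΔ.eq_coords_of_eq hab ⟨s, hs⟩

theorem Finset.exists_eq_singleton_of_sum_le_one {ι : Type*} {T : Finset ι} {f : ι → ℤ}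
    (hT : T.Nonempty) (hf : ∀ s ∈ T, 0 < f s) (hsum : ∑ s ∈ T, f s ≤ 1) :
    ∃ s, T = {s} ∧ f s = 1 := by
  have hcard : (T.card : ℤ) ≤ ∑ s ∈ T, f s := by
    simpa using Finset.card_nsmul_le_sum T f 1 hf
  have hcard_one : T.card = 1 := by
    have := hT.card_pos
    omega
  obtain ⟨s, rfl⟩ := Finset.card_eq_one.mp hcard_one
  exact ⟨s, rfl, le_antisymm (by simpa using hsum) (hf s (Finset.mem_singleton_self s))⟩

theorem RootSystemWithBase.coeff_eq_of_sum_smul_eq (R : RootSystemWithBase V) {a b : V → ℤ}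
    (hab : ∑ s ∈ R.Δ, (a s : ℝ) • s = ∑ s ∈ R.Δ, (b s : ℝ) • s) : ∀ s ∈ R.Δ, a s = b s :=
  fun s hs => Int.cast_injective (R.base_indep.eq_of_finset_sum_smul_eq hab s hs)

theorem unique_simple_root_outside_with_coxeter_label_one_general [DecidableEq V]
    (R : RootSystemWithBase V) (θ : V) (c : V → ℤ) (coeff : V → V → ℤ) (S : Finset V)
    (hθ : θ ∈ R.Φ)
    (hθc : θ = ∑ s ∈ R.Δ, (c s : ℝ) • s)
    (hcpos : ∀ s ∈ R.Δ, 0 < c s)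
    (hcoeff : ∀ α ∈ R.Φ, α = ∑ s ∈ R.Δ, (coeff α s : ℝ) • s)
    (hS : S ⊂ R.Δ)
    (hlev : ∀ α ∈ R.Φ, (∑ s ∈ R.Δ \ S, coeff α s) ∈ ({-1, 0, 1} : Set ℤ)) :
    ∃ s ∈ R.Δ, s ∉ S ∧ c s = 1 ∧ ∀ t ∈ R.Δ, t ∉ S → t = s := by
  have hθ_coeff : ∀ s ∈ R.Δ, coeff θ s = c s :=
    R.coeff_eq_of_sum_smul_eq ((hcoeff θ hθ).symm.trans hθc)
  have hlevel : ∑ s ∈ R.Δ \ S, c s ≤ 1 := by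
    have hθ_level := hlev θ hθ
    rw [Finset.sum_congr rfl fun s hs => hθ_coeff s (Finset.mem_sdiff.mp hs).1] at hθ_level
    simp only [Set.mem_insert_iff, Set.mem_singleton_iff] at hθ_level
    rcases hθ_level with h | h | h <;> linarith
  obtain ⟨s, hs, hcs⟩ := Finset.exists_eq_singleton_of_sum_le_one
    (Finset.sdiff_nonempty.mpr (Finset.not_subset.mpr (Finset.exists_of_ssubset hS)))
    (fun s hs => hcpos s (Finset.mem_sdiff.mp hs).1) hlevel
  have hmem : ∀ t, t ∈ R.Δ → t ∉ S → t = s := fun t htΔ htS => by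
    simpa [hs] using Finset.mem_sdiff.mpr ⟨htΔ, htS⟩
  obtain ⟨hsΔ, hsS⟩ := Finset.mem_sdiff.mp (hs ▸ Finset.mem_singleton_self s)
  exact ⟨s, hsΔ, hsS, hcs, hmem⟩

/-- Let `θ = ∑ c s • s` be the highest root of an irreducible root system,
with positive Coxeter labels `c`, and let `S ⊂ Δ`. If every root has level (sum of its
coefficients at the simple roots outside `S`) in `{-1, 0, 1}`, then exactly one simple
root lies outside `S` and its Coxeter label is `1`. -/
theorem unique_simple_root_outside_with_coxeter_label_one [DecidableEq V]
    (R : RootSystemWithBase V) (θ : V) (c : V → ℤ) (coeff : V → V → ℤ) (S : Finset V)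
    (hθ : θ ∈ R.Φ)
    (hθc : θ = ∑ s ∈ R.Δ, (c s : ℝ) • s)
    (hcpos : ∀ s ∈ R.Δ, 0 < c s)
    (hcoeff : ∀ α ∈ R.Φ, α = ∑ s ∈ R.Δ, (coeff α s : ℝ) • s)
    (hhighest : ∀ α ∈ R.Φ, ∀ s ∈ R.Δ, coeff α s ≤ c s)
    (hS : S ⊂ R.Δ)
    (hlev : ∀ α ∈ R.Φ, (∑ s ∈ R.Δ \ S, coeff α s) ∈ ({-1, 0, 1} : Set ℤ)) :
    ∃ s ∈ R.Δ, s ∉ S ∧ c s = 1 ∧ ∀ t ∈ R.Δ, t ∉ S → t = s :=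
  unique_simple_root_outside_with_coxeter_label_one_general R θ c coeff S hθ hθc hcpos hcoeff hS
    hlev
end

section
/- Let K be a compact group acting linearly and continuously on a finite-dimensional real vector space V, and let C ⊆ V be a closed convex cone invariant under K with C ≠ C ∩ (−C). Then there exists a non-zero K-fixed vector v ∈ C. (The vector is obtained by averaging over K with Haar measure an element v ∈ C on which some linear functional non-negative on C is strictly positive.) -/
/-!
Pick `v ∈ C` with `-v ∉ C`. Farkas' lemma for the proper cone `C` gives a continuous functional
`f ≥ 0` on `C` with `f v > 0`. The Haar average of the orbit of `v` is `K`-fixed, lies in `C`,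
and `f` is still positive on it, since `f` is positive on the orbit near `1`.
-/

open MeasureTheory

section Cone

variable {E : Type*} [TopologicalSpace E] [AddCommGroup E] [IsTopologicalAddGroup E]
  [Module ℝ E] [ContinuousSMul ℝ E] [LocallyConvexSpace ℝ E]

theorem exists_dual_nonneg_pos_of_neg_notMem {C : Set E} (hclosed : IsClosed C)
    (hconv : Convex ℝ C) (hcone : ∀ v ∈ C, ∀ t : ℝ, 0 < t → t • v ∈ C) {v : E} (hv : v ∈ C)
    (hnv : -v ∉ C) : ∃ f : StrongDual ℝ E, (∀ x ∈ C, 0 ≤ f x) ∧ 0 < f v := by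
  let C' : ConvexCone ℝ E := ConvexCone.hull ℝ C
  have hC' : (C' : Set E) = C := by
    refine Set.Subset.antisymm (fun x hx => ?_) ConvexCone.subset_hull
    obtain ⟨r, hr, y, hy, rfl⟩ := (ConvexCone.mem_hull_of_convex hconv).1 hx
    exact hcone y hy r hr
  lift C' to ProperCone ℝ E using ⟨hC' ▸ ⟨v, hv⟩, hC' ▸ hclosed⟩ with P
  have hPC : (P : Set E) = C := hC'
  obtain ⟨f, hfP, hfv⟩ :=
    P.hyperplane_separation_point (x₀ := -v) (by rwa [← SetLike.mem_coe, hPC])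
  refine ⟨f, fun x hx => hfP x (by rwa [← SetLike.mem_coe, hPC]), ?_⟩
  simpa using hfv

end Cone

section OrbitAverage

variable {K V : Type*} [Group K] [MeasurableSpace K] [NormedAddCommGroup V] [NormedSpace ℝ V]
  (μ : Measure K) (ρ : K →* (V ≃ₗ[ℝ] V))

noncomputable def orbitAverage (v : V) : V := ∫ k, ρ k v ∂μ

theorem orbitAverage_apply_eq [FiniteDimensional ℝ V] [MeasurableMul K] [μ.IsMulLeftInvariant]
    (v : V) (k : K) :
    ρ k (orbitAverage μ ρ v) = orbitAverage μ ρ v := calc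
  ρ k (orbitAverage μ ρ v) = ∫ x, ρ (k * x) v ∂μ := by
    simp only [orbitAverage, map_mul]
    exact ((ρ k).toContinuousLinearEquiv.integral_comp_comm _).symm
  _ = orbitAverage μ ρ v := integral_mul_left_eq_self (fun x => ρ x v) k

variable [TopologicalSpace K] [CompactSpace K] [OpensMeasurableSpace K] [IsFiniteMeasure μ]
  {ρ} {v : V}

theorem integrable_orbit (hv : Continuous fun k => ρ k v) : Integrable (fun k => ρ k v) μ :=
  hv.integrable_of_hasCompactSupport (HasCompactSupport.of_compactSpace _)

variable [CompleteSpace V]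

theorem orbitAverage_mem [IsProbabilityMeasure μ] {C : Set V} (hclosed : IsClosed C)
    (hconv : Convex ℝ C) (hC : ∀ k, ρ k v ∈ C) (hv : Continuous fun k => ρ k v) :
    orbitAverage μ ρ v ∈ C :=
  hconv.integral_mem hclosed (.of_forall hC) (integrable_orbit μ hv)

theorem orbitAverage_pos [μ.IsOpenPosMeasure] (f : StrongDual ℝ V)
    (hf : ∀ k, 0 ≤ f (ρ k v)) (hfv : 0 < f v) (hv : Continuous fun k => ρ k v) :
    0 < f (orbitAverage μ ρ v) := by
  rw [orbitAverage, ← f.integral_comp_comm (integrable_orbit μ hv)]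
  refine (f.continuous.comp hv).integral_pos_of_hasCompactSupport_nonneg_nonzero
    (HasCompactSupport.of_compactSpace _) hf (x := 1) ?_
  simpa using hfv.ne'

end OrbitAverage

/-- If a compact group `K` acts linearly and continuously on a
finite-dimensional real vector space `V` leaving invariant a closed convex cone `C`
which is not a linear subspace (`C ≠ C ∩ (-C)`), then `C` contains a non-zero
`K`-fixed vector. -/
theorem invariant_cone_has_fixed_vector
    {V : Type*} [NormedAddCommGroup V] [NormedSpace ℝ V] [FiniteDimensional ℝ V]
    {K : Type*} [Group K] [TopologicalSpace K] [IsTopologicalGroup K] [CompactSpace K]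
    (ρ : K →* (V ≃ₗ[ℝ] V))
    (hcont : Continuous fun p : K × V => ρ p.1 p.2)
    (C : Set V) (hclosed : IsClosed C) (hconv : Convex ℝ C)
    (hcone : ∀ v ∈ C, ∀ t : ℝ, 0 < t → t • v ∈ C)
    (hinv : ∀ k : K, ∀ v ∈ C, ρ k v ∈ C)
    (hns : C ≠ C ∩ (-C)) :
    ∃ v ∈ C, v ≠ 0 ∧ ∀ k : K, ρ k v = v := by
  obtain ⟨v, hvC, hnv⟩ : ∃ v ∈ C, -v ∉ C := by
    by_contra! h
    exact hns (Set.left_eq_inter.2 fun x hx => Set.mem_neg.2 (h x hx))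
  obtain ⟨f, hfC, hfv⟩ := exists_dual_nonneg_pos_of_neg_notMem hclosed hconv hcone hvC hnv
  borelize K
  let μ : Measure K := Measure.haarMeasure ⊤
  have : IsProbabilityMeasure μ := ⟨by
    rw [← TopologicalSpace.PositiveCompacts.coe_top]; exact Measure.haarMeasure_self⟩
  have hv : Continuous fun k => ρ k v := hcont.comp (continuous_id.prodMk continuous_const)
  have horbit : ∀ k, ρ k v ∈ C := fun k => hinv k v hvC
  refine ⟨orbitAverage μ ρ v, orbitAverage_mem μ hclosed hconv horbit hv, fun h => ?_,
    orbitAverage_apply_eq μ ρ v⟩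
  exact (orbitAverage_pos μ f (fun k => hfC _ (horbit k)) hfv hv).ne' (by rw [h, map_zero])
end

section
/- Let H_0 = r(H_{α_i} + (1/2) Σ_{j≠i} μ_j H_{α_j}) be an element of a Cartan subalgebra of a semisimple Lie algebra with root system Φ and simple roots {α_1,...,α_l}, such that H_0 = i·H_{ω_i} is proportional to the coweight dual to the fundamental weight ω_i. If there exists an automorphism T of the root system Φ with T(α_j) = α_j for all j ≠ i and T(ω_i) = −ω_i, then T(α_i) = −α_i − Σ_{j≠i} μ_j α_j must be a root; since roots are integer combinations of simple roots, all coefficients μ_j must be integers. -/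
/-- Let `Δ` be the simple roots of a root system `Φ`, and let
`ω = Δ i + (1/2) Σ_{j≠i} μ_j Δ_j` be (proportional to) the fundamental weight at `i`.
If `T` is an automorphism of `Φ` with `T(Δ_j) = Δ_j` for `j ≠ i` and `T(ω) = -ω`, then
`T(Δ i) = -Δ i - Σ_{j≠i} μ_j Δ_j`, and since it must be a root (an integer combination
of simple roots), all coefficients `μ_j` are integers. -/
theorem time_reflection_coefficients_integral
    {V : Type*} [AddCommGroup V] [Module ℝ V]
    {n : ℕ} [DecidableEq (Fin n)]
    (Δ : Fin n → V) (hindep : LinearIndependent ℝ Δ)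
    (Φ : Set V) (hΔΦ : ∀ j, Δ j ∈ Φ)
    (hint : ∀ β ∈ Φ, ∃ c : Fin n → ℤ, β = ∑ j, (c j : ℝ) • Δ j)
    (i : Fin n) (μ : Fin n → ℝ) (ω : V)
    (hω : ω = Δ i + (1 / 2 : ℝ) • ∑ j ∈ Finset.univ.erase i, μ j • Δ j)
    (T : V ≃ₗ[ℝ] V) (hTΦ : ∀ β ∈ Φ, T β ∈ Φ)
    (hTfix : ∀ j, j ≠ i → T (Δ j) = Δ j)
    (hTω : T ω = -ω) :
    T (Δ i) = -(Δ i) - ∑ j ∈ Finset.univ.erase i, μ j • Δ j ∧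
    ∀ j, j ≠ i → ∃ m : ℤ, μ j = (m : ℝ) := by
  set S := ∑ j ∈ Finset.univ.erase i, μ j • Δ j with hS
  have hTS : T S = S := by
    rw [hS, map_sum]
    refine Finset.sum_congr rfl fun j hj => ?_
    rw [map_smul, hTfix j (Finset.ne_of_mem_erase hj)]
  have h1 : T (Δ i) = -(Δ i) - S := by
    have := hTω
    rw [hω] at this
    rw [map_add, map_smul, hTS] at this
    have : T (Δ i) = -(Δ i + (1/2 : ℝ) • S) - (1/2 : ℝ) • S := by
      rw [← this]; abel
    rw [this]
    have : -((1/2 : ℝ) • S) - (1/2 : ℝ) • S = -S := by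
      rw [← neg_smul, ← sub_smul]; norm_num
    rw [neg_add]
    rw [sub_eq_add_neg, add_assoc, ← sub_eq_add_neg ( -((1/2:ℝ)•S)), this, ← sub_eq_add_neg]
  refine ⟨h1, ?_⟩
  obtain ⟨c, hc⟩ := hint _ (hTΦ _ (hΔΦ i))
  rw [h1] at hc
  set f : Fin n → ℝ := fun j => if j = i then -1 else -μ j with hf
  have hsum : -(Δ i) - S = ∑ j, f j • Δ j := by
    rw [← Finset.add_sum_erase _ _ (Finset.mem_univ i)]
    simp only [hf, if_pos rfl, neg_one_smul]
    rw [sub_eq_add_neg, ← Finset.sum_neg_distrib]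
    congr 1
    refine Finset.sum_congr rfl fun j hj => ?_
    rw [if_neg (Finset.ne_of_mem_erase hj), neg_smul]
  have hzero : ∑ j, ((c j : ℝ) - f j) • Δ j = 0 := by
    simp only [sub_smul, Finset.sum_sub_distrib]
    rw [← hsum, ← hc]
    abel
  have heq : ∀ j, (c j : ℝ) = f j := by
    intro j
    have := Fintype.linearIndependent_iff.mp hindep _ hzero j
    linarith [this]
  intro j hj
  refine ⟨-c j, ?_⟩
  have := heq j
  rw [hf] at this
  simp only [if_neg hj] at this
  push_cast
  linarith
end
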